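/- Let k ≥ 2 be a natural number and let S ⊆ ℕ be a k-automatic set. If limsup_{N→∞} π_S(N)/N = 1, then liminf_{N→∞} π_S(N)/N = 1. -/

import Mathlib

/-!
Put `T = Sᶜ`; the hypothesis says that `π_T(N) < εN` for arbitrarily large `N`, and we show
`π_T(N) / N → 0`. For `p ≥ 1` and `w < k^j` the automaton reads `p * k^j + w` as the digits of `p`
followed by the `j` zero-padded digits of `w`, so the number of elements of `T` in the block
`[p k^j, (p+1) k^j)` depends only on the state reached on `p`. As there are finitely many states,
every such block contains at most `π_T(P k^j)` elements, for one `P` independent of `j`. Taking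
`P k^j ≤ N < P k^(j+1)` for an `N` at which `T` is sparse, all blocks at scale `k^j` except the
first have density `< ε`, and cutting `[0, N')` into these blocks gives `π_T(N') ≤ k^j + εN'`.
-/

open Filter

/-- A sequence `h : ℕ → Δ` is `k`-automatic if there is a DFAO (finite state set `Q`,
initial state `q₀`, transition function `δ`, output function `τ`) computing `h n` by
reading the base-`k` digits of `n` from the most significant digit to the least. -/
def IsAutomaticSeq {Δ : Type*} (k : ℕ) (h : ℕ → Δ) : Prop :=
  ∃ (Q : Type) (_ : Fintype Q) (q₀ : Q) (δ : Q → ℕ → Q) (τ : Q → Δ),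
    ∀ n : ℕ, h n = τ (((Nat.digits k n).reverse).foldl δ q₀)

/-- A set `S ⊆ ℕ` is `k`-automatic if its characteristic function is `k`-automatic. -/
def IsAutomaticSet (k : ℕ) (S : Set ℕ) : Prop :=
  IsAutomaticSeq k (S.indicator fun _ => (1 : ℕ))

/-- `piCount S N` is the number of elements of `S` that are less than `N`. -/
noncomputable def piCount (S : Set ℕ) (N : ℕ) : ℕ := (S ∩ Set.Iio N).ncard

open Topology

open Finset in
theorem piCount_eq_card_filter (S : Set ℕ) [DecidablePred (· ∈ S)] (N : ℕ) :
    piCount S N = #{n ∈ range N | n ∈ S} := by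
  rw [piCount, ← Set.ncard_coe_finset]
  congr 1
  ext n
  simp [and_comm]

open Finset Classical in
theorem piCount_congr {S T : Set ℕ} {N : ℕ} (h : ∀ n < N, n ∈ S ↔ n ∈ T) :
    piCount S N = piCount T N := by
  simp only [piCount_eq_card_filter]
  exact congrArg card (filter_congr fun n hn => h n (mem_range.1 hn))

open Finset Classical in
theorem piCount_add (S : Set ℕ) (a b : ℕ) :
    piCount S (a + b) = piCount S a + piCount ((a + ·) ⁻¹' S) b := by
  simp only [piCount_eq_card_filter, card_filter, sum_range_add, Set.mem_preimage]

theorem piCount_mono (S : Set ℕ) : Monotone (piCount S) := fun a b hab => by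
  obtain ⟨c, rfl⟩ := Nat.exists_eq_add_of_le hab
  rw [piCount_add]
  exact Nat.le_add_right _ _

open Finset Classical in
theorem piCount_le (S : Set ℕ) (N : ℕ) : piCount S N ≤ N := by
  simpa [piCount_eq_card_filter] using card_filter_le (range N) (· ∈ S)

open Finset Classical in
theorem piCount_add_piCount_compl (S : Set ℕ) (N : ℕ) : piCount S N + piCount Sᶜ N = N := by
  simpa [piCount_eq_card_filter] using card_filter_add_card_filter_not (s := range N) (· ∈ S)

theorem piCount_compl_div (S : Set ℕ) {N : ℕ} (hN : N ≠ 0) :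
    (piCount Sᶜ N : ℝ) / N = 1 - piCount S N / N := by
  have h : (piCount S N : ℝ) + piCount Sᶜ N = N := by exact_mod_cast piCount_add_piCount_compl S N
  field_simp
  linarith

theorem piCount_le_of_forall_block_le {S : Set ℕ} {K : ℕ} (hK : 0 < K) {c : ℝ} (hc : 0 ≤ c)
    (h : ∀ p ≠ 0, (piCount ((p * K + ·) ⁻¹' S) K : ℝ) ≤ c * K) (N : ℕ) :
    (piCount S N : ℝ) ≤ K + c * N := by
  have hblocks : ∀ m : ℕ, (piCount S ((m + 1) * K) : ℝ) ≤ K + c * (m * K) := by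
    intro m
    induction m with
    | zero => simpa using piCount_le S K
    | succ m ih =>
      rw [add_mul _ 1 K, one_mul, piCount_add, Nat.cast_add]
      have := h (m + 1) m.succ_ne_zero
      push_cast at *
      linarith
  have hN : N ≤ (N / K + 1) * K := by
    rw [add_mul, one_mul]; exact (Nat.lt_div_mul_add hK).le
  calc (piCount S N : ℝ) ≤ piCount S ((N / K + 1) * K) := by exact_mod_cast piCount_mono S hN
    _ ≤ K + c * ((N / K : ℕ) * K) := hblocks _
    _ ≤ K + c * N := by gcongr; exact_mod_cast Nat.div_mul_le_self N K

theorem Finite.exists_forall_exists_le_eq {α : Type*} [Finite α] (f : ℕ → α) :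
    ∃ B, ∀ n, ∃ m ≤ B, f m = f n := by
  let g : Set.range f → ℕ := fun y => y.2.choose
  obtain ⟨B, hB⟩ := (Set.range g).toFinite.bddAbove
  exact ⟨B, fun n => ⟨g ⟨f n, n, rfl⟩, hB ⟨_, rfl⟩, (⟨n, rfl⟩ : f n ∈ Set.range f).choose_spec⟩⟩

section Digits

variable {Q : Type*} (k : ℕ) (δ : Q → ℕ → Q) (q₀ : Q)

def runDigits (n : ℕ) : Q := ((Nat.digits k n).reverse).foldl δ q₀

variable {k}

theorem runDigits_add_mul (hk : 1 < k) {d a : ℕ} (hd : d < k) (ha : a ≠ 0) :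
    runDigits k δ q₀ (d + k * a) = δ (runDigits k δ q₀ a) d := by
  simp [runDigits, Nat.digits_add k hk d a hd (Or.inr ha)]

theorem runDigits_mul_pow_add_congr (hk : 1 < k) {p p' : ℕ} (hp : p ≠ 0) (hp' : p' ≠ 0)
    (h : runDigits k δ q₀ p = runDigits k δ q₀ p') (j : ℕ) {w : ℕ} (hw : w < k ^ j) :
    runDigits k δ q₀ (p * k ^ j + w) = runDigits k δ q₀ (p' * k ^ j + w) := by
  induction j generalizing w with
  | zero => simp_all
  | succ j ih =>
    have hk0 : 0 < k := by omega
    have hwk : w / k < k ^ j := by rwa [Nat.div_lt_iff_lt_mul hk0, ← pow_succ]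
    have hsplit : ∀ q, q * k ^ (j + 1) + w = w % k + k * (q * k ^ j + w / k) := fun q => by
      conv_lhs => rw [← Nat.mod_add_div w k]
      ring
    have hpos : ∀ q ≠ 0, q * k ^ j + w / k ≠ 0 := fun q hq => by positivity
    rw [hsplit, hsplit, runDigits_add_mul δ q₀ hk (Nat.mod_lt w hk0) (hpos p hp),
      runDigits_add_mul δ q₀ hk (Nat.mod_lt w hk0) (hpos p' hp'), ih hwk]

end Digits

theorem IsAutomaticSet.compl {k : ℕ} {S : Set ℕ} (hS : IsAutomaticSet k S) :
    IsAutomaticSet k Sᶜ := by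
  obtain ⟨Q, hQ, q₀, δ, τ, hτ⟩ := hS
  refine ⟨Q, hQ, q₀, δ, fun q => 1 - τ q, fun n => ?_⟩
  show _ = 1 - τ _
  rw [← hτ]
  by_cases hn : n ∈ S <;> simp [hn]

theorem IsAutomaticSet.exists_piCount_block_le_piCount {k : ℕ} (hk : 1 < k) {S : Set ℕ}
    (hS : IsAutomaticSet k S) :
    ∃ P, 0 < P ∧
      ∀ j p, p ≠ 0 → piCount ((p * k ^ j + ·) ⁻¹' S) (k ^ j) ≤ piCount S (P * k ^ j) := by
  obtain ⟨Q, hQ, q₀, δ, τ, hτ⟩ := hS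
  have hτ' : ∀ n, S.indicator 1 n = τ (runDigits k δ q₀ n) := hτ
  have hmem : ∀ {n m}, runDigits k δ q₀ n = runDigits k δ q₀ m → (n ∈ S ↔ m ∈ S) := by
    intro n m h
    have := hτ' n
    rw [h, ← hτ' m] at this
    by_cases hn : n ∈ S <;> by_cases hm : m ∈ S <;> simp_all
  obtain ⟨B, hB⟩ := Finite.exists_forall_exists_le_eq fun n => runDigits k δ q₀ (n + 1)
  refine ⟨B + 2, by omega, fun j p hp => ?_⟩
  obtain ⟨m, hmB, hm⟩ := hB (p - 1)
  rw [Nat.sub_add_cancel (Nat.pos_of_ne_zero hp)] at hm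
  calc piCount ((p * k ^ j + ·) ⁻¹' S) (k ^ j) = piCount (((m + 1) * k ^ j + ·) ⁻¹' S) (k ^ j) :=
        piCount_congr fun w hw => hmem <|
          runDigits_mul_pow_add_congr δ q₀ hk hp m.succ_ne_zero hm.symm j hw
    _ ≤ piCount S ((m + 1) * k ^ j + k ^ j) := by rw [piCount_add]; exact Nat.le_add_left _ _
    _ ≤ piCount S ((B + 2) * k ^ j) := piCount_mono S (by
          rw [← add_one_mul]; exact Nat.mul_le_mul_right _ (by omega))

theorem IsAutomaticSet.exists_forall_piCount_block_le {k : ℕ} (hk : 1 < k) {T : Set ℕ}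
    (hT : IsAutomaticSet k T) (h : ∀ ε > 0, ∃ᶠ N in atTop, (piCount T N : ℝ) < ε * N)
    {c : ℝ} (hc : 0 < c) :
    ∃ j, ∀ p ≠ 0, (piCount ((p * k ^ j + ·) ⁻¹' T) (k ^ j) : ℝ) ≤ c * (k ^ j : ℕ) := by
  obtain ⟨P, hP, hblock⟩ := hT.exists_piCount_block_le_piCount hk
  obtain ⟨N, hN, hPN⟩ :=
    ((h (c / (P * k)) (by positivity)).and_eventually (eventually_ge_atTop P)).exists
  set j := Nat.log k (N / P)
  have hlow : P * k ^ j ≤ N := by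
    rw [mul_comm, ← Nat.le_div_iff_mul_le hP]
    exact Nat.pow_log_le_self k (Nat.div_pos hPN hP).ne'
  have hup : N < P * k ^ (j + 1) := by
    rw [mul_comm, ← Nat.div_lt_iff_lt_mul hP]
    exact Nat.lt_pow_succ_log_self hk _
  refine ⟨j, fun p hp => ?_⟩
  calc (piCount ((p * k ^ j + ·) ⁻¹' T) (k ^ j) : ℝ) ≤ piCount T (P * k ^ j) := by
        exact_mod_cast hblock j p hp
    _ ≤ piCount T N := by exact_mod_cast piCount_mono T hlow
    _ ≤ c / (P * k) * N := hN.le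
    _ ≤ c / (P * k) * (P * k ^ (j + 1) : ℕ) := by gcongr
    _ = c * (k ^ j : ℕ) := by push_cast; field_simp; ring

theorem IsAutomaticSet.tendsto_piCount_div_zero {k : ℕ} (hk : 1 < k) {T : Set ℕ}
    (hT : IsAutomaticSet k T) (h : ∀ ε > 0, ∃ᶠ N in atTop, (piCount T N : ℝ) < ε * N) :
    Tendsto (fun N => (piCount T N : ℝ) / N) atTop (𝓝 0) := by
  refine tendsto_order.2 ⟨fun a ha => Eventually.of_forall fun N => ha.trans_le (by positivity),
    fun a ha => ?_⟩
  obtain ⟨j, hj⟩ := hT.exists_forall_piCount_block_le hk h (half_pos ha)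
  have hbound := piCount_le_of_forall_block_le (pow_pos (by omega) j) (half_pos ha).le hj
  filter_upwards [(tendsto_const_div_atTop_nhds_zero_nat ((k ^ j : ℕ) : ℝ)).eventually
    (gt_mem_nhds (half_pos ha)), eventually_gt_atTop 0] with N hsmall hN
  calc (piCount T N : ℝ) / N ≤ (k ^ j : ℕ) / N + a / 2 := by
        rw [div_le_iff₀ (by positivity), add_mul, div_mul_cancel₀ _ (by positivity)]
        exact hbound N
    _ < a := by linarith

theorem limsup_one_imp_liminf_one
    (k : ℕ) (hk : 2 ≤ k) (S : Set ℕ) (hS : IsAutomaticSet k S)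
    (h1 : Filter.atTop.limsup (fun N : ℕ => (piCount S N : ℝ) / N) = 1) :
    Filter.atTop.liminf (fun N : ℕ => (piCount S N : ℝ) / N) = 1 := by
  have hsmall : ∀ ε > 0, ∃ᶠ N in atTop, (piCount Sᶜ N : ℝ) < ε * N := by
    intro ε hε
    have hfreq : ∃ᶠ N in atTop, 1 - ε < (piCount S N : ℝ) / N :=
      frequently_lt_of_lt_limsup (isCoboundedUnder_le_of_le atTop fun N => by positivity)
        (by rw [h1]; linarith)
    refine (hfreq.and_eventually (eventually_ne_atTop 0)).mono fun N ⟨hlt, hN⟩ => ?_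
    rw [← div_lt_iff₀ (by positivity), piCount_compl_div S hN]
    linarith
  have hlim : Tendsto (fun N : ℕ => (piCount S N : ℝ) / N) atTop (𝓝 1) := by
    have := (hS.compl.tendsto_piCount_div_zero hk hsmall).const_sub 1
    rw [sub_zero] at this
    refine this.congr' ?_
    filter_upwards [eventually_ne_atTop 0] with N hN
    rw [piCount_compl_div S hN, sub_sub_cancel]
  exact hlim.liminf_eq
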